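/- Characterization of clearing via the clearing potential: for every price function θ and valuation profile v, Ŵ(θ;v) = 0 if and only if θ is a clearing price function for v (i.e., θ supports some feasible allocation). -/
import Mathlib


open Finset

/-- A bundle is a subset of the `m` items. -/
abbrev Bundle (m : ℕ) := Finset (Fin m)

/-- An allocation is feasible if its bundles are pairwise disjoint. -/
def Feasible {m n : ℕ} (a : Fin n → Bundle m) : Prop :=
  ∀ i j : Fin n, i ≠ j → Disjoint (a i) (a j)

/-- The (finite) set `ℱ` of feasible allocations. -/
noncomputable def FeasSet (m n : ℕ) : Finset (Fin n → Bundle m) :=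
  @Finset.filter _ (fun a => Feasible a) (Classical.decPred _) Finset.univ

lemma FeasSet_nonempty (m n : ℕ) : (FeasSet m n).Nonempty :=
  ⟨fun _ => ∅, by
    simp only [FeasSet, Finset.mem_filter, Finset.mem_univ, true_and]
    intro i j _
    simp⟩

/-- Bidder `i`'s indirect utility `U(θ; v_i) = max_{x ∈ 𝒳} (v_i(x) - θ(x))`. -/
noncomputable def U {m : ℕ} (θ : Bundle m → ℝ) (vi : Bundle m → ℝ) : ℝ :=
  Finset.univ.sup' Finset.univ_nonempty (fun x : Bundle m => vi x - θ x)

/-- The seller's indirect revenue `R(θ) = max_{a ∈ ℱ} Σ_i θ(a_i)`. -/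
noncomputable def R (m n : ℕ) (θ : Bundle m → ℝ) : ℝ :=
  (FeasSet m n).sup' (FeasSet_nonempty m n) (fun a => ∑ i, θ (a i))

/-- The total value `V(a; v) = Σ_i v_i(a_i)`. -/
def V {m n : ℕ} (a : Fin n → Bundle m) (v : Fin n → Bundle m → ℝ) : ℝ :=
  ∑ i, v i (a i)

/-- `W(θ; v) = Σ_i U(θ; v_i) + R(θ)`. -/
noncomputable def W {m n : ℕ} (θ : Bundle m → ℝ) (v : Fin n → Bundle m → ℝ) : ℝ :=
  (∑ i, U θ (v i)) + R m n θ

/-- The optimal social welfare `max_{a ∈ ℱ} V(a; v)`. -/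
noncomputable def maxV {m n : ℕ} (v : Fin n → Bundle m → ℝ) : ℝ :=
  (FeasSet m n).sup' (FeasSet_nonempty m n) (fun a => V a v)

/-- The clearing potential `Ŵ(θ; v) = W(θ; v) - max_{a ∈ ℱ} V(a; v)`. -/
noncomputable def What {m n : ℕ} (θ : Bundle m → ℝ) (v : Fin n → Bundle m → ℝ) : ℝ :=
  W θ v - maxV v

/-- Prices `θ` support a feasible allocation `a`. -/
def Supports {m n : ℕ} (θ : Bundle m → ℝ) (v : Fin n → Bundle m → ℝ)
    (a : Fin n → Bundle m) : Prop :=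
  Feasible a ∧ (∀ i : Fin n, ∀ x : Bundle m, v i x - θ x ≤ v i (a i) - θ (a i)) ∧
  (∀ a' : Fin n → Bundle m, Feasible a' → ∑ i, θ (a' i) ≤ ∑ i, θ (a i))


lemma mem_FeasSet {m n : ℕ} {a : Fin n → Bundle m} : a ∈ FeasSet m n ↔ Feasible a := by
  rw [FeasSet, @Finset.mem_filter _ _ (Classical.decPred _)]
  simp

lemma U_ge {m : ℕ} (θ vi : Bundle m → ℝ) (x : Bundle m) : vi x - θ x ≤ U θ vi :=
  Finset.le_sup' (fun x : Bundle m => vi x - θ x) (Finset.mem_univ x)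

lemma R_ge {m n : ℕ} (θ : Bundle m → ℝ) {a : Fin n → Bundle m} (ha : Feasible a) :
    ∑ i, θ (a i) ≤ R m n θ :=
  Finset.le_sup' (fun a : Fin n → Bundle m => ∑ i, θ (a i)) (mem_FeasSet.mpr ha)

lemma maxV_ge {m n : ℕ} (v : Fin n → Bundle m → ℝ) {a : Fin n → Bundle m}
    (ha : Feasible a) : V a v ≤ maxV v :=
  Finset.le_sup' (fun a : Fin n → Bundle m => V a v) (mem_FeasSet.mpr ha)

lemma V_split {m n : ℕ} (θ : Bundle m → ℝ) (v : Fin n → Bundle m → ℝ)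
    (a : Fin n → Bundle m) :
    V a v = (∑ i, (v i (a i) - θ (a i))) + ∑ i, θ (a i) := by
  simp [V, Finset.sum_sub_distrib]

/-- `Ŵ(θ; v) = 0` iff `θ` is a clearing price function for `v`. -/
theorem clearing_potential_eq_zero_iff {m n : ℕ} (hm : 1 ≤ m) (hn : 1 ≤ n)
    (θ : Bundle m → ℝ) (v : Fin n → Bundle m → ℝ) :
    What θ v = 0 ↔ ∃ a : Fin n → Bundle m, Supports θ v a := by
  constructor
  · intro h
    obtain ⟨a, haF, haV⟩ := Finset.exists_mem_eq_sup' (FeasSet_nonempty m n)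
      (fun a => V a v)
    have haF' : Feasible a := mem_FeasSet.mp haF
    have hmax : maxV v = V a v := haV
    have hVW : V a v = W θ v := by
      have h0 : W θ v - maxV v = 0 := h
      rw [hmax] at h0
      linarith
    -- termwise slack
    have hsum : (∑ i, (U θ (v i) - (v i (a i) - θ (a i)))) + (R m n θ - ∑ i, θ (a i)) = 0 := by
      have hv := V_split θ v a
      rw [hv, Finset.sum_sub_distrib] at hVW
      simp only [W] at hVW
      simp only [Finset.sum_sub_distrib, W]
      linarith
    have h1 : ∀ i : Fin n, 0 ≤ U θ (v i) - (v i (a i) - θ (a i)) := fun i =>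
      sub_nonneg.mpr (U_ge θ (v i) (a i))
    have h2 : (0:ℝ) ≤ R m n θ - ∑ i, θ (a i) := sub_nonneg.mpr (R_ge θ haF')
    have hs1 : (0:ℝ) ≤ ∑ i, (U θ (v i) - (v i (a i) - θ (a i))) :=
      Finset.sum_nonneg (fun i _ => h1 i)
    have hs0 : (∑ i, (U θ (v i) - (v i (a i) - θ (a i)))) = 0 := by linarith
    have h2' : R m n θ = ∑ i, θ (a i) := by linarith
    have hterm : ∀ i ∈ Finset.univ, U θ (v i) - (v i (a i) - θ (a i)) = 0 :=
      (Finset.sum_eq_zero_iff_of_nonneg (fun i _ => h1 i)).mp hs0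
    refine ⟨a, haF', fun i x => ?_, fun a' ha' => ?_⟩
    · have := hterm i (Finset.mem_univ i)
      have hUi : U θ (v i) = v i (a i) - θ (a i) := by linarith
      calc v i x - θ x ≤ U θ (v i) := U_ge θ (v i) x
        _ = _ := hUi
    · calc ∑ i, θ (a' i) ≤ R m n θ := R_ge θ ha'
        _ = ∑ i, θ (a i) := h2'
  · rintro ⟨a, haF, hU, hR⟩
    have hUi : ∀ i, U θ (v i) = v i (a i) - θ (a i) := fun i =>
      le_antisymm (Finset.sup'_le _ _ (fun x _ => hU i x)) (U_ge θ (v i) (a i))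
    have hRe : R m n θ = ∑ i, θ (a i) :=
      le_antisymm (Finset.sup'_le _ _ (fun a' ha' => hR a' (mem_FeasSet.mp ha')))
        (R_ge θ haF)
    have hWV : W θ v = V a v := by
      rw [W, hRe, V_split θ v a]
      congr 1
      exact Finset.sum_congr rfl (fun i _ => hUi i)
    have hle : maxV v ≤ W θ v := by
      apply Finset.sup'_le
      intro b hb
      have hbF := mem_FeasSet.mp hb
      rw [W, V_split θ v b]
      gcongr with i
      · exact (hUi i ▸ hU i (b i) : v i (b i) - θ (b i) ≤ U θ (v i))
      · exact R_ge θ hbF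
    have hge : V a v ≤ maxV v := maxV_ge v haF
    have : What θ v = W θ v - maxV v := rfl
    rw [this]
    linarith [hWV ▸ hge]
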